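/- Let R(c) := Σ_{r=1}^{R} k_r c^{y_r}(y_r' − y_r) be the mass action reaction vector of a chemical reaction network and let c∞ ∈ ℝ^N_{>0} be a complex balance equilibrium. Then for every c ∈ ℝ^N_{>0} one has the identity −R(c) · log(c/c∞) = Σ_{r=1}^{R} k_r c∞^{y_r} Ψ(c^{y_r}/c∞^{y_r} ; c^{y_r'}/c∞^{y_r'}), and in particular −R(c) · log(c/c∞) ≥ 0. -/

import Mathlib

/- STATEMENT 0: For a chemical reaction network with mass action kinetics and a strictly
positive complex balance equilibrium `cinf`, for every strictly positive state `c` one has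
`-R(c) · log(c/cinf) = ∑_r k_r cinf^{y_r} Ψ(c^{y_r}/cinf^{y_r}; c^{y'_r}/cinf^{y'_r})`,
and in particular this quantity is nonnegative. -/

namespace Stmt0

/-- Monomial `c^y = ∏ i, c i ^ y i`. -/
noncomputable def cpow {N : ℕ} (c : Fin N → ℝ) (y : Fin N → ℕ) : ℝ :=
  ∏ i, c i ^ y i

/-- `Ψ(x; y) = x log(x/y) - x + y`. -/
noncomputable def Psi (x y : ℝ) : ℝ := x * Real.log (x / y) - x + y

/-- Complex balance condition: for every complex `yc`, the total outflow equals the total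
inflow at `yc`. (For `yc` which is not a complex of the network both sides are empty sums.) -/
def IsComplexBalanced {N R : ℕ} (y y' : Fin R → Fin N → ℕ) (k : Fin R → ℝ)
    (z : Fin N → ℝ) : Prop :=
  ∀ yc : Fin N → ℕ,
    ∑ r ∈ Finset.univ.filter (fun r => y r = yc), k r * cpow z (y r) =
    ∑ s ∈ Finset.univ.filter (fun s => y' s = yc), k s * cpow z (y s)

lemma cpow_pos {N : ℕ} {c : Fin N → ℝ} (hc : ∀ i, 0 < c i) (y : Fin N → ℕ) :
    0 < cpow c y :=
  Finset.prod_pos fun i _ => pow_pos (hc i) _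

lemma psi_nonneg {x y : ℝ} (hx : 0 < x) (hy : 0 < y) : 0 ≤ Psi x y := by
  have h := Real.log_le_sub_one_of_pos (show 0 < y / x by positivity)
  have hlog : Real.log (y / x) = - Real.log (x / y) := by
    rw [← Real.log_inv]; congr 1; field_simp
  have hxy : x * (y / x) = y := mul_div_cancel₀ y hx.ne'
  unfold Psi
  nlinarith [mul_le_mul_of_nonneg_left h hx.le]

lemma log_cpow_div {N : ℕ} {c cinf : Fin N → ℝ} (hc : ∀ i, 0 < c i)
    (hcinf : ∀ i, 0 < cinf i) (y : Fin N → ℕ) :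
    Real.log (cpow c y / cpow cinf y) = ∑ i, (y i : ℝ) * Real.log (c i / cinf i) := by
  rw [Real.log_div (cpow_pos hc y).ne' (cpow_pos hcinf y).ne']
  unfold cpow
  rw [Real.log_prod (fun i _ => (pow_pos (hc i) _).ne'),
      Real.log_prod (fun i _ => (pow_pos (hcinf i) _).ne'),
      ← Finset.sum_sub_distrib]
  refine Finset.sum_congr rfl fun i _ => ?_
  rw [Real.log_pow, Real.log_pow, Real.log_div (hc i).ne' (hcinf i).ne']
  ring

lemma balance_sum {N R : ℕ} (y y' : Fin R → Fin N → ℕ) (k : Fin R → ℝ)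
    (cinf : Fin N → ℝ) (hcinf : ∀ i, 0 < cinf i)
    (hbal : IsComplexBalanced y y' k cinf) (c : Fin N → ℝ) :
    ∑ r, k r * cpow cinf (y r) * (cpow c (y' r) / cpow cinf (y' r)) =
      ∑ r, k r * cpow c (y r) := by
  classical
  set T : Finset (Fin N → ℕ) := Finset.univ.image y ∪ Finset.univ.image y' with hT
  have hmem' : ∀ r : Fin R, y' r ∈ T := fun r =>
    Finset.mem_union_right _ (Finset.mem_image_of_mem _ (Finset.mem_univ r))
  have hmem : ∀ r : Fin R, y r ∈ T := fun r =>
    Finset.mem_union_left _ (Finset.mem_image_of_mem _ (Finset.mem_univ r))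
  rw [← Finset.sum_fiberwise_of_maps_to (fun r _ => hmem' r)
      (fun r => k r * cpow cinf (y r) * (cpow c (y' r) / cpow cinf (y' r))),
      ← Finset.sum_fiberwise_of_maps_to (fun r _ => hmem r)
      (fun r => k r * cpow c (y r))]
  refine Finset.sum_congr rfl fun yc _ => ?_
  have h1 : ∑ r ∈ Finset.univ.filter (fun r => y' r = yc),
      k r * cpow cinf (y r) * (cpow c (y' r) / cpow cinf (y' r))
      = (cpow c yc / cpow cinf yc) * ∑ r ∈ Finset.univ.filter (fun r => y' r = yc),
        k r * cpow cinf (y r) := by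
    rw [Finset.mul_sum]
    refine Finset.sum_congr rfl fun r hr => ?_
    have h2 := (Finset.mem_filter.mp hr).2
    rw [h2]; ring
  have hbal' := hbal yc
  simp only [cpow] at hbal' h1 ⊢
  rw [h1, ← hbal', Finset.mul_sum]
  refine Finset.sum_congr rfl fun r hr => ?_
  have hyr := (Finset.mem_filter.mp hr).2
  have h0 : (∏ i, cinf i ^ y r i) ≠ 0 := (cpow_pos hcinf (y r)).ne'
  rw [← hyr]
  field_simp

theorem entropy_dissipation_identity {N R : ℕ} (y y' : Fin R → Fin N → ℕ)
    (k : Fin R → ℝ) (hk : ∀ r, 0 < k r)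
    (cinf : Fin N → ℝ) (hcinf : ∀ i, 0 < cinf i)
    (hbal : IsComplexBalanced y y' k cinf)
    (c : Fin N → ℝ) (hc : ∀ i, 0 < c i) :
    -(∑ i, (∑ r, k r * cpow c (y r) * ((y' r i : ℝ) - (y r i : ℝ))) *
        Real.log (c i / cinf i)) =
      ∑ r, k r * cpow cinf (y r) *
        Psi (cpow c (y r) / cpow cinf (y r)) (cpow c (y' r) / cpow cinf (y' r)) ∧
    0 ≤ -(∑ i, (∑ r, k r * cpow c (y r) * ((y' r i : ℝ) - (y r i : ℝ))) *
        Real.log (c i / cinf i)) := by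
  have hid : -(∑ i, (∑ r, k r * cpow c (y r) * ((y' r i : ℝ) - (y r i : ℝ))) *
        Real.log (c i / cinf i)) =
      ∑ r, k r * cpow cinf (y r) *
        Psi (cpow c (y r) / cpow cinf (y r)) (cpow c (y' r) / cpow cinf (y' r)) := by
    have hL : -(∑ i, (∑ r, k r * cpow c (y r) * ((y' r i : ℝ) - (y r i : ℝ))) *
          Real.log (c i / cinf i)) =
        ∑ r, k r * cpow c (y r) *
          (Real.log (cpow c (y r) / cpow cinf (y r)) -
            Real.log (cpow c (y' r) / cpow cinf (y' r))) := by
      simp only [log_cpow_div hc hcinf, ← Finset.sum_sub_distrib, Finset.mul_sum,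
        Finset.sum_mul, ← Finset.sum_neg_distrib]
      rw [Finset.sum_comm]
      refine Finset.sum_congr rfl fun r _ => Finset.sum_congr rfl fun i _ => ?_
      ring
    have hpsi : ∀ r, k r * cpow cinf (y r) *
        Psi (cpow c (y r) / cpow cinf (y r)) (cpow c (y' r) / cpow cinf (y' r)) =
        k r * cpow c (y r) *
          (Real.log (cpow c (y r) / cpow cinf (y r)) -
            Real.log (cpow c (y' r) / cpow cinf (y' r)))
        - k r * cpow c (y r)
        + k r * cpow cinf (y r) * (cpow c (y' r) / cpow cinf (y' r)) := by
      intro r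
      have hu : 0 < cpow c (y r) / cpow cinf (y r) := by
        exact div_pos (cpow_pos hc _) (cpow_pos hcinf _)
      have hv : 0 < cpow c (y' r) / cpow cinf (y' r) := by
        exact div_pos (cpow_pos hc _) (cpow_pos hcinf _)
      have hlog : Real.log ((cpow c (y r) / cpow cinf (y r)) /
          (cpow c (y' r) / cpow cinf (y' r))) =
          Real.log (cpow c (y r) / cpow cinf (y r)) -
            Real.log (cpow c (y' r) / cpow cinf (y' r)) :=
        Real.log_div hu.ne' hv.ne'
      have hcancel : cpow cinf (y r) * (cpow c (y r) / cpow cinf (y r)) = cpow c (y r) :=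
        mul_div_cancel₀ _ (cpow_pos hcinf _).ne'
      unfold Psi
      rw [hlog]
      linear_combination (k r * (Real.log (cpow c (y r) / cpow cinf (y r)) -
        Real.log (cpow c (y' r) / cpow cinf (y' r)) - 1)) * hcancel
    rw [hL]
    simp only [hpsi]
    rw [Finset.sum_add_distrib, Finset.sum_sub_distrib,
      balance_sum y y' k cinf hcinf hbal c]
    ring
  refine ⟨hid, ?_⟩
  rw [hid]
  refine Finset.sum_nonneg fun r _ => ?_
  have := psi_nonneg (div_pos (cpow_pos hc (y r)) (cpow_pos hcinf (y r)))
    (div_pos (cpow_pos hc (y' r)) (cpow_pos hcinf (y' r)))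
  exact mul_nonneg (mul_nonneg (hk r).le (cpow_pos hcinf _).le) this

end Stmt0
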